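/- Let Υ be a tree and let ‖·‖ be a strictly convex norm on C₀(Υ) equivalent to the supremum norm. Then the associated function μ : Υ → ℝ is constant on no ever-branching subset of Υ. -/

import Mathlib

open Filter Topology Set

noncomputable section

/-- `n` is a norm on `X` equivalent to the given norm. -/
def IsEquivNorm {X : Type*} [SeminormedAddCommGroup X] [Module ℝ X] (n : X → ℝ) : Prop :=
  (∀ (a : ℝ) (x : X), n (a • x) = |a| * n x) ∧
  (∀ x y : X, n (x + y) ≤ n x + n y) ∧
  ∃ c C : ℝ, 0 < c ∧ ∀ x : X, c * ‖x‖ ≤ n x ∧ n x ≤ C * ‖x‖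

/-- Local uniform convexity of a norm-like function `n`. -/
def IsLUR {X : Type*} [AddCommGroup X] (n : X → ℝ) : Prop :=
  ∀ (x : X) (xs : ℕ → X),
    Tendsto (fun k => n (xs k)) atTop (𝓝 (n x)) →
    Tendsto (fun k => n (x + xs k)) atTop (𝓝 (2 * n x)) →
    Tendsto (fun k => n (x - xs k)) atTop (𝓝 0)

/-- Midpoint local uniform convexity. -/
def IsMLUR {X : Type*} [AddCommGroup X] (n : X → ℝ) : Prop :=
  ∀ (x : X) (hs : ℕ → X),
    Tendsto (fun k => n (x + hs k)) atTop (𝓝 (n x)) →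
    Tendsto (fun k => n (x - hs k)) atTop (𝓝 (n x)) →
    Tendsto (fun k => n (hs k)) atTop (𝓝 0)

/-- Strict convexity of a norm-like function `n`. -/
def IsStrictConvexNorm {X : Type*} [AddCommGroup X] [Module ℝ X] (n : X → ℝ) : Prop :=
  ∀ x y : X, n x = n y → n ((2⁻¹ : ℝ) • (x + y)) = n x → x = y

/-- The dual norm of `n` on the continuous dual of `X`. -/
def dualNorm {X : Type*} [SeminormedAddCommGroup X] [NormedSpace ℝ X] (n : X → ℝ)
    (ξ : X →L[ℝ] ℝ) : ℝ :=
  sSup ((fun x => ξ x) '' {x : X | n x ≤ 1})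

/-- Weak local uniform convexity. -/
def IsWLUR {X : Type*} [SeminormedAddCommGroup X] [NormedSpace ℝ X] (n : X → ℝ) : Prop :=
  ∀ (x : X) (xs : ℕ → X),
    Tendsto (fun k => n (xs k)) atTop (𝓝 (n x)) →
    Tendsto (fun k => n (x + xs k)) atTop (𝓝 (2 * n x)) →
    ∀ ξ : X →L[ℝ] ℝ, Tendsto (fun k => ξ (xs k)) atTop (𝓝 (ξ x))

/-- The weak topology of a normed space: the coarsest topology making all continuous
linear functionals continuous. -/
def weakTopology (X : Type*) [SeminormedAddCommGroup X] [NormedSpace ℝ X] :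
    TopologicalSpace X :=
  ⨅ ξ : X →L[ℝ] ℝ, TopologicalSpace.induced (fun x => ξ x) inferInstance

/-- The Kadec property: weak and norm topologies coincide on the unit sphere of `n`. -/
def IsKadec {X : Type*} [SeminormedAddCommGroup X] [NormedSpace ℝ X] (n : X → ℝ) : Prop :=
  TopologicalSpace.induced (Subtype.val : {x : X // n x = 1} → X) (weakTopology X) =
    TopologicalSpace.induced (Subtype.val : {x : X // n x = 1} → X) inferInstance

/-- A tree: every set of strict predecessors is well-ordered. -/
def IsTree (Υ : Type*) [PartialOrder Υ] : Prop :=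
  ∀ t : Υ, IsWellOrder {s : Υ // s < t} (· < ·)

/-- A Hausdorff tree: points whose predecessor set is nonempty with no greatest element
are determined by their sets of strict predecessors. -/
def IsHausdorffTree (Υ : Type*) [PartialOrder Υ] : Prop :=
  ∀ t t' : Υ, (Set.Iio t).Nonempty → (∀ s, s < t → ∃ s', s < s' ∧ s' < t) →
    Set.Iio t = Set.Iio t' → t = t'

/-- The locally compact topology of a tree: the coarsest topology in which every
interval `(0, t]` is both open and closed. -/
def treeTopology (Υ : Type*) [PartialOrder Υ] : TopologicalSpace Υ :=
  TopologicalSpace.generateFrom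
    ({S | ∃ t : Υ, S = Set.Iic t} ∪ {S | ∃ t : Υ, S = (Set.Iic t)ᶜ})

/-- The tree `Υ` carrying its locally compact topology. -/
def TreeSpace (Υ : Type*) [PartialOrder Υ] : Type _ := Υ

instance (Υ : Type*) [PartialOrder Υ] : TopologicalSpace (TreeSpace Υ) := treeTopology Υ

/-- `C₀(Υ)`: continuous real functions on the tree vanishing at infinity, with sup norm. -/
abbrev C0Tree (Υ : Type*) [PartialOrder Υ] := ZeroAtInftyContinuousMap (TreeSpace Υ) ℝ

/-- Identification of the tree and its topological incarnation. -/
def toTree {Υ : Type*} [PartialOrder Υ] (t : Υ) : TreeSpace Υ := t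

/-- `t` is a good point for `ρ`: off a finite set of immediate successors of `t`,
`ρ` is bounded away above `ρ t`.  A bad point is a point that is not good. -/
def GoodPoint {Υ : Type*} [PartialOrder Υ] (ρ : Υ → ℝ) (t : Υ) : Prop :=
  ∃ (F : Finset Υ) (c : ℝ), ρ t < c ∧ ∀ u : Υ, t ⋖ u → u ∉ F → c ≤ ρ u

/-- A subset `Γ` of a tree is ever-branching if no `t ∈ Γ` has totally ordered
set of successors within `Γ`. -/
def EverBranching {Υ : Type*} [PartialOrder Υ] (Γ : Set Υ) : Prop :=
  ∀ t ∈ Γ, ∃ u ∈ Γ, ∃ v ∈ Γ, t ≤ u ∧ t ≤ v ∧ ¬ u ≤ v ∧ ¬ v ≤ u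

/-- `ρ` is constant on no (nonempty) ever-branching subset. -/
def ConstOnNoEverBranching {Υ : Type*} [PartialOrder Υ] (ρ : Υ → ℝ) : Prop :=
  ∀ Γ : Set Υ, Γ.Nonempty → EverBranching Γ → ¬ ∃ c : ℝ, ∀ t ∈ Γ, ρ t = c

/-- The function `μ` associated with an equivalent norm `n` on `C₀(Υ)`:
`μ t` is the infimum of `n f` over all `f` of the form `𝟙_(0,t] + f'` with
`f'` supported in `(t, ∞)`. -/
def muFn {Υ : Type*} [PartialOrder Υ] (n : C0Tree Υ → ℝ) (t : Υ) : ℝ :=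
  sInf (n '' {f : C0Tree Υ |
    (∀ s : Υ, s ≤ t → f (toTree s) = 1) ∧
    ∀ s : Υ, ¬ s ≤ t → ¬ t < s → f (toTree s) = 0})

/-- A copy of `α` carrying the discrete topology. -/
def DiscreteOf (α : Type*) : Type _ := α

instance (α : Type*) : TopologicalSpace (DiscreteOf α) := ⊥
instance (α : Type*) : DiscreteTopology (DiscreteOf α) := ⟨rfl⟩

/-- The space `c₀(α)` with its sup norm. -/
abbrev c0 (α : Type*) := ZeroAtInftyContinuousMap (DiscreteOf α) ℝ

/-- Identification of `α` with its discrete copy. -/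
def toDisc {α : Type*} (a : α) : DiscreteOf α := a

end

/-! If `μ` were constant, say equal to `k`, on an ever-branching set `Γ`, one could pick in `Γ` a
binary tree of points in which the two children of every node are incomparable, together with
near-minimizers `f σ` for `μ` at its nodes. Averaging `f` over the `2 ^ j` descendants of a node
`σ` at depth `j` keeps the averages admissible for `σ`, with norms tending to `k`. Two admissible
functions at a node differ only strictly above it, and the cones above two siblings are disjoint,
so consecutive averages differ by `O(2 ^ -j)` in the sup norm. Their limits `ψ σ` are exact
minimizers, `ψ σ` being the midpoint of the limits at the children of `σ`. Strict convexity then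
forces the limits at the two children of the root to coincide, although at the first child one
of them is `1` and the other `0`. -/

namespace IsTree

variable {Υ : Type*} [PartialOrder Υ]

theorem le_total_of_le (htree : IsTree Υ) {a b c : Υ} (ha : a ≤ c) (hb : b ≤ c) :
    a ≤ b ∨ b ≤ a := by
  rcases ha.lt_or_eq with ha | rfl
  · rcases hb.lt_or_eq with hb | rfl
    · have := htree c
      rcases trichotomous_of (· < ·) (⟨a, ha⟩ : {s // s < c}) ⟨b, hb⟩ with h | h | h
      · exact Or.inl (le_of_lt h)
      · exact Or.inl (congrArg Subtype.val h).le
      · exact Or.inr (le_of_lt h)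
    · exact Or.inl ha.le
  · exact Or.inr hb

theorem wellFoundedLT (htree : IsTree Υ) : WellFoundedLT Υ := by
  refine ⟨⟨fun t => ⟨t, fun y hy => ?_⟩⟩⟩
  have hwf : WellFounded ((· < ·) : {s // s < t} → {s // s < t} → Prop) :=
    (htree t).toIsWellFounded.wf
  exact hwf.induction (C := fun y => Acc (· < ·) y.1) ⟨y, hy⟩
    (fun y ih => ⟨y.1, fun z hz => ih ⟨z, hz.trans y.2⟩ hz⟩)

theorem exists_isLeast (htree : IsTree Υ) {S : Set Υ} {t : Υ} (hSt : S ⊆ Iic t)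
    (hS : S.Nonempty) : ∃ m, IsLeast S m := by
  have := htree.wellFoundedLT
  obtain ⟨m, hmS, hmin⟩ := WellFounded.has_min wellFounded_lt S hS
  refine ⟨m, hmS, fun s hs => ?_⟩
  rcases htree.le_total_of_le (hSt hmS) (hSt hs) with h | h
  · exact h
  · exact (h.lt_or_eq.resolve_left (hmin s hs)).ge

theorem exists_Iio_eq (htree : IsTree Υ) {D : Set Υ} {t : Υ} (hD : IsLowerSet D)
    (hDt : D ⊆ Iic t) (ht : t ∉ D) : ∃ z ≤ t, Iio z = D := by
  obtain ⟨z, ⟨hzt, hzD⟩, hmin⟩ :=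
    htree.exists_isLeast (S := Iic t \ D) sdiff_subset ⟨t, le_rfl, ht⟩
  refine ⟨z, hzt, Set.ext fun s => ⟨fun hsz => ?_, fun hsD => ?_⟩⟩
  · by_contra hsD
    exact hsz.not_ge (hmin ⟨hsz.le.trans hzt, hsD⟩)
  · rcases htree.le_total_of_le (hDt hsD) hzt with h | h
    · exact h.lt_of_ne (by rintro rfl; exact hzD hsD)
    · exact absurd (hD h hsD) hzD

end IsTree

theorem IsHausdorffTree.exists_Iic_inter_Iic {Υ : Type*} [PartialOrder Υ] (htree : IsTree Υ)
    (hH : IsHausdorffTree Υ) {u t : Υ} (hne : (Iic u ∩ Iic t).Nonempty) :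
    ∃ d, Iic u ∩ Iic t = Iic d := by
  set D := Iic u ∩ Iic t
  have hD : IsLowerSet D := (isLowerSet_Iic u).inter (isLowerSet_Iic t)
  by_cases hmax : ∃ d ∈ D, ∀ s ∈ D, s ≤ d
  · obtain ⟨d, hdD, hmax⟩ := hmax
    exact ⟨d, Set.ext fun s => ⟨fun hs => hmax s hs, fun hs => hD hs hdD⟩⟩
  push Not at hmax
  have hu : u ∉ D := fun hu => by
    obtain ⟨s, hs, hsu⟩ := hmax u hu
    exact hsu hs.1
  have ht : t ∉ D := fun ht => by
    obtain ⟨s, hs, hst⟩ := hmax t ht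
    exact hst hs.2
  -- `D` is then `Iio z` for some `z ≤ t` and `Iio z'` for some `z' ≤ u`; being Hausdorff,
  -- the tree has `z = z'`, which puts `z` in `D`.
  obtain ⟨z, hzt, hz⟩ := htree.exists_Iio_eq hD inter_subset_right ht
  obtain ⟨z', hzu, hz'⟩ := htree.exists_Iio_eq hD inter_subset_left hu
  have hzz' : z = z' := by
    refine hH z z' (hz ▸ hne) (fun s hs => ?_) (hz.trans hz'.symm)
    replace hs : s ∈ D := hz ▸ hs
    obtain ⟨s', hs'D, hs's⟩ := hmax s hs
    refine ⟨s', ?_, (hz ▸ hs'D : s' ∈ Iio z)⟩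
    rcases htree.le_total_of_le hs.2 hs'D.2 with h | h
    · exact h.lt_of_ne (by rintro rfl; exact hs's le_rfl)
    · exact absurd h hs's
  have hzD : z ∈ D := ⟨hzz' ▸ hzu, hzt⟩
  exact absurd (hz ▸ hzD : z ∈ Iio z) (lt_irrefl z)

section TreeTopology

variable {Υ : Type*} [PartialOrder Υ]

def treeIic (t : Υ) : Set (TreeSpace Υ) := (Iic t : Set Υ)

theorem isClopen_treeIic (t : Υ) : IsClopen (treeIic t) :=
  ⟨isOpen_compl_iff.mp (TopologicalSpace.isOpen_generateFrom_of_mem (Or.inr ⟨t, rfl⟩)),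
    TopologicalSpace.isOpen_generateFrom_of_mem (Or.inl ⟨t, rfl⟩)⟩

theorem isCompact_treeIic (htree : IsTree Υ) (hH : IsHausdorffTree Υ) (t : Υ) :
    IsCompact (treeIic t) := by
  refine isCompact_iff_ultrafilter_le_nhds.mpr fun F hFt => ?_
  have hFt : treeIic t ∈ F := le_principal_iff.mp hFt
  obtain ⟨x, ⟨hxt, hxF⟩, hxmin⟩ := htree.exists_isLeast (S := {s | s ≤ t ∧ treeIic s ∈ F})
    (fun _ hs => hs.1) ⟨t, le_rfl, hFt⟩
  refine ⟨toTree x, hxt, ?_⟩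
  change @LE.le (Filter Υ) _ F.toFilter (@nhds Υ (treeTopology Υ) x)
  rw [treeTopology, TopologicalSpace.nhds_generateFrom]
  refine le_iInf₂ fun S ⟨hx, hS⟩ => le_principal_iff.mpr ?_
  rcases hS with ⟨u, rfl⟩ | ⟨u, rfl⟩
  · exact F.mem_of_superset hxF fun _ hs => le_trans hs hx
  · refine F.compl_mem_iff_notMem.mpr fun huF => hx ?_
    have hF : treeIic u ∩ treeIic t ∈ F := F.inter_mem huF hFt
    obtain ⟨d, hd⟩ := hH.exists_Iic_inter_Iic htree (F.nonempty_of_mem hF)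
    have hdu : d ∈ Iic u ∩ Iic t := hd ▸ le_rfl
    exact (hxmin ⟨hdu.2, F.mem_of_superset hF hd.subset⟩).trans hdu.1

end TreeTopology

theorem ZeroAtInftyContinuousMap.continuous_eval_const {α β : Type*} [TopologicalSpace α]
    [PseudoMetricSpace β] [Zero β] (x : α) :
    Continuous fun f : ZeroAtInftyContinuousMap α β => f x :=
  (ContinuousEvalConst.continuous_eval_const (F := BoundedContinuousFunction α β) x).comp
    ZeroAtInftyContinuousMap.isometry_toBCF.continuous

theorem ZeroAtInftyContinuousMap.norm_add_le_max_of_disjoint {α β : Type*}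
    [TopologicalSpace α] [SeminormedAddCommGroup β] {f g : ZeroAtInftyContinuousMap α β}
    (h : ∀ x, f x = 0 ∨ g x = 0) : ‖f + g‖ ≤ max ‖f‖ ‖g‖ := by
  rw [← norm_toBCF_eq_norm, BoundedContinuousFunction.norm_le (by positivity)]
  intro x
  have hf : ‖f x‖ ≤ ‖f‖ := norm_toBCF_eq_norm (f := f) ▸ f.toBCF.norm_coe_le_norm x
  have hg : ‖g x‖ ≤ ‖g‖ := norm_toBCF_eq_norm (f := g) ▸ g.toBCF.norm_coe_le_norm x
  rcases h x with h0 | h0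
  · simpa [h0] using le_max_of_le_right hg
  · simpa [h0] using le_max_of_le_left hf

section Admissible

variable {Υ : Type*} [PartialOrder Υ]

/-- The set over which `muFn n t` is the infimum of `n`. -/
def muAdmissible (t : Υ) : Set (C0Tree Υ) :=
  {f | (∀ s : Υ, s ≤ t → f (toTree s) = 1) ∧ ∀ s : Υ, ¬ s ≤ t → ¬ t < s → f (toTree s) = 0}

theorem muAdmissible_nonempty (htree : IsTree Υ) (hH : IsHausdorffTree Υ) (t : Υ) :
    (muAdmissible t).Nonempty := by
  classical
  have hcont : Continuous ((treeIic t).indicator (1 : TreeSpace Υ → ℝ)) :=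
    (isClopen_treeIic t).continuous_indicator continuous_const
  have hsupp : HasCompactSupport ((treeIic t).indicator (1 : TreeSpace Υ → ℝ)) :=
    .intro' (isCompact_treeIic htree hH t) (isClopen_treeIic t).isClosed
      fun _ hx => indicator_of_notMem hx _
  refine ⟨⟨⟨_, hcont⟩, hsupp.is_zero_at_infty⟩, fun s hs => ?_, fun s hs _ => ?_⟩
  · exact indicator_of_mem (show toTree s ∈ treeIic t from hs) _
  · exact indicator_of_notMem (show toTree s ∉ treeIic t from hs) _

theorem convex_muAdmissible (t : Υ) : Convex ℝ (muAdmissible t) := by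
  rintro f ⟨hf1, hf0⟩ g ⟨hg1, hg0⟩ a b - - hab
  refine ⟨fun s hs => ?_, fun s hs hs' => ?_⟩
  · simp [hf1 s hs, hg1 s hs, hab]
  · simp [hf0 s hs hs', hg0 s hs hs']

theorem isClosed_muAdmissible (t : Υ) : IsClosed (muAdmissible t) := by
  have hev (s : Υ) := ZeroAtInftyContinuousMap.continuous_eval_const (β := ℝ) (toTree s)
  simp only [muAdmissible, ofPred_and, ofPred_forall]
  exact .inter (isClosed_iInter fun s => isClosed_iInter fun _ =>
      isClosed_eq (hev s) continuous_const)
    (isClosed_iInter fun s => isClosed_iInter fun _ => isClosed_iInter fun _ =>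
      isClosed_eq (hev s) continuous_const)

theorem muAdmissible_subset_of_le (htree : IsTree Υ) {t u : Υ} (htu : t ≤ u) :
    muAdmissible u ⊆ muAdmissible t := by
  rintro f ⟨hf1, hf0⟩
  refine ⟨fun s hs => hf1 s (hs.trans htu), fun s hst hts => hf0 s (fun hsu => ?_) ?_⟩
  · rcases htree.le_total_of_le hsu htu with h | h
    · exact hst h
    · exact hts (h.lt_of_ne fun h' => hst h'.ge)
  · exact fun hus => hts (htu.trans_lt hus)

theorem apply_eq_of_mem_muAdmissible {t s : Υ} {f g : C0Tree Υ} (hf : f ∈ muAdmissible t)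
    (hg : g ∈ muAdmissible t) (hs : ¬ t < s) : f (toTree s) = g (toTree s) := by
  by_cases h : s ≤ t
  · rw [hf.1 s h, hg.1 s h]
  · rw [hf.2 s h hs, hg.2 s h hs]

theorem norm_sub_add_sub_le_max (htree : IsTree Υ) {u v : Υ} (huv : IncompRel (· ≤ ·) u v)
    {f f' g g' : C0Tree Υ} (hf : f ∈ muAdmissible u) (hf' : f' ∈ muAdmissible u)
    (hg : g ∈ muAdmissible v) (hg' : g' ∈ muAdmissible v) :
    ‖(f - f') + (g - g')‖ ≤ max ‖f - f'‖ ‖g - g'‖ := by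
  refine ZeroAtInftyContinuousMap.norm_add_le_max_of_disjoint fun x => ?_
  by_cases hux : u < x
  · refine Or.inr (sub_eq_zero.mpr (apply_eq_of_mem_muAdmissible hg hg' fun hvx => ?_))
    rcases htree.le_total_of_le hux.le hvx.le with h | h
    · exact huv.1 h
    · exact huv.2 h
  · exact Or.inl (sub_eq_zero.mpr (apply_eq_of_mem_muAdmissible hf hf' hux))

end Admissible

namespace IsEquivNorm

variable {X : Type*} [SeminormedAddCommGroup X] [Module ℝ X] {n : X → ℝ}

theorem nonneg (hn : IsEquivNorm n) (x : X) : 0 ≤ n x := by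
  obtain ⟨-, -, c, C, hc, hcC⟩ := hn
  exact (mul_nonneg hc.le (norm_nonneg x)).trans (hcC x).1

theorem continuous (hn : IsEquivNorm n) : Continuous n := by
  obtain ⟨-, htri, c, C, -, hcC⟩ := hn
  refine (LipschitzWith.of_le_add_mul' C fun x y => ?_).continuous
  have := htri y (x - y)
  rw [add_sub_cancel] at this
  rw [dist_eq_norm]
  linarith [(hcC (x - y)).2]

theorem midpoint_le (hn : IsEquivNorm n) (x y : X) :
    n ((2⁻¹ : ℝ) • (x + y)) ≤ 2⁻¹ * (n x + n y) := by
  rw [hn.1, abs_of_pos (by norm_num)]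
  exact mul_le_mul_of_nonneg_left (hn.2.1 x y) (by norm_num)

end IsEquivNorm

section Mu

variable {Υ : Type*} [PartialOrder Υ] {n : C0Tree Υ → ℝ}

theorem muFn_le (hn : IsEquivNorm n) {t : Υ} {f : C0Tree Υ} (hf : f ∈ muAdmissible t) :
    muFn n t ≤ n f :=
  csInf_le ⟨0, by rintro _ ⟨g, -, rfl⟩; exact hn.nonneg g⟩ ⟨f, hf, rfl⟩

theorem exists_lt_muFn_add (htree : IsTree Υ) (hH : IsHausdorffTree Υ) (t : Υ) {ε : ℝ}
    (hε : 0 < ε) : ∃ f ∈ muAdmissible t, n f < muFn n t + ε := by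
  obtain ⟨_, ⟨f, hf, rfl⟩, hlt⟩ :=
    exists_lt_of_csInf_lt ((muAdmissible_nonempty htree hH t).image n) (lt_add_of_pos_right _ hε)
  exact ⟨f, hf, hlt⟩

end Mu

section DyadicAverage

variable {X : Type*} [AddCommGroup X] [Module ℝ X]

/-- The average of `f` over the `2 ^ j` words `τ ++ σ` with `τ` of length `j`. -/
noncomputable def dyadicAverage (f : List Bool → X) : ℕ → List Bool → X
  | 0, σ => f σ
  | j + 1, σ => (2⁻¹ : ℝ) • (dyadicAverage f j (true :: σ) + dyadicAverage f j (false :: σ))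

variable {f : List Bool → X}

theorem dyadicAverage_mem {S : List Bool → Set X} (hS : ∀ σ, Convex ℝ (S σ))
    (hanti : ∀ b σ, S (b :: σ) ⊆ S σ) (hf : ∀ σ, f σ ∈ S σ) (j : ℕ) (σ : List Bool) :
    dyadicAverage f j σ ∈ S σ := by
  induction j generalizing σ with
  | zero => exact hf σ
  | succ j ih =>
    rw [dyadicAverage, smul_add]
    exact hS σ (hanti true σ (ih _)) (hanti false σ (ih _)) (by norm_num) (by norm_num)
      (by norm_num)

theorem dyadicAverage_le {p : X → ℝ} (hp : ∀ x y, p ((2⁻¹ : ℝ) • (x + y)) ≤ 2⁻¹ * (p x + p y))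
    {k : ℝ} (hf : ∀ σ, p (f σ) ≤ k + 2⁻¹ ^ σ.length) (j : ℕ) (σ : List Bool) :
    p (dyadicAverage f j σ) ≤ k + 2⁻¹ ^ (j + σ.length) := by
  induction j generalizing σ with
  | zero => simpa [dyadicAverage] using hf σ
  | succ j ih =>
    have h := add_le_add (ih (true :: σ)) (ih (false :: σ))
    simp only [List.length_cons, ← add_assoc] at h
    rw [Nat.add_right_comm]
    exact (hp _ _).trans (by linarith)

theorem eq_midpoint_of_tendsto_dyadicAverage [TopologicalSpace X] [T2Space X] [ContinuousAdd X]
    [ContinuousConstSMul ℝ X] {ψ : List Bool → X}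
    (hψ : ∀ σ, Tendsto (fun j => dyadicAverage f j σ) atTop (𝓝 (ψ σ))) (σ : List Bool) :
    ψ σ = (2⁻¹ : ℝ) • (ψ (true :: σ) + ψ (false :: σ)) :=
  tendsto_nhds_unique ((hψ σ).comp (tendsto_add_atTop_nat 1))
    (((hψ (true :: σ)).add (hψ (false :: σ))).const_smul _)

end DyadicAverage

/-- A binary tree of points of `Υ` indexed by words, the children of `σ` being `b :: σ`. -/
structure DyadicBranching (Υ : Type*) [PartialOrder Υ] where
  node : List Bool → Υ
  node_le_node_cons : ∀ b σ, node σ ≤ node (b :: σ)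
  incompRel_node_cons : ∀ σ, IncompRel (· ≤ ·) (node (true :: σ)) (node (false :: σ))

theorem EverBranching.exists_dyadicBranching {Υ : Type*} [PartialOrder Υ] {Γ : Set Υ}
    (hΓ : EverBranching Γ) {t₀ : Υ} (ht₀ : t₀ ∈ Γ) :
    ∃ B : DyadicBranching Υ, ∀ σ, B.node σ ∈ Γ := by
  choose u hu v hv htu htv huv hvu using hΓ
  let child (p : Γ) : Bool → Γ
    | true => ⟨u p p.2, hu p p.2⟩
    | false => ⟨v p p.2, hv p p.2⟩
  let node (σ : List Bool) : Γ := σ.foldr (fun b p => child p b) ⟨t₀, ht₀⟩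
  refine ⟨⟨fun σ => node σ, fun b σ => ?_, fun σ => ⟨huv _ _, hvu _ _⟩⟩, fun σ => (node σ).2⟩
  cases b
  · exact htv _ _
  · exact htu _ _

namespace DyadicBranching

variable {Υ : Type*} [PartialOrder Υ] (B : DyadicBranching Υ) {f : List Bool → C0Tree Υ}

theorem dyadicAverage_mem_muAdmissible (htree : IsTree Υ)
    (hf : ∀ σ, f σ ∈ muAdmissible (B.node σ)) (j : ℕ) (σ : List Bool) :
    dyadicAverage f j σ ∈ muAdmissible (B.node σ) :=
  dyadicAverage_mem (fun _ => convex_muAdmissible _)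
    (fun b σ => muAdmissible_subset_of_le htree (B.node_le_node_cons b σ)) hf j σ

theorem norm_dyadicAverage_succ_sub_le (htree : IsTree Υ)
    (hf : ∀ σ, f σ ∈ muAdmissible (B.node σ)) {M : ℝ}
    (hM : ∀ j σ, ‖dyadicAverage f j σ‖ ≤ M) (j : ℕ) (σ : List Bool) :
    ‖dyadicAverage f (j + 1) σ - dyadicAverage f j σ‖ ≤ 2 * M * 2⁻¹ ^ j := by
  induction j generalizing σ with
  | zero => simpa [two_mul] using (norm_sub_le _ _).trans (add_le_add (hM 1 σ) (hM 0 σ))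
  | succ j ih =>
    set Y := dyadicAverage f
    have hmem := B.dyadicAverage_mem_muAdmissible htree hf
    have hsplit : Y (j + 2) σ - Y (j + 1) σ = (2⁻¹ : ℝ) •
        ((Y (j + 1) (true :: σ) - Y j (true :: σ)) + (Y (j + 1) (false :: σ) - Y j (false :: σ))) := by
      simp only [Y, dyadicAverage]
      module
    calc ‖Y (j + 2) σ - Y (j + 1) σ‖
        = 2⁻¹ * ‖(Y (j + 1) (true :: σ) - Y j (true :: σ)) +
            (Y (j + 1) (false :: σ) - Y j (false :: σ))‖ := by
          rw [hsplit, norm_smul]; norm_num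
      _ ≤ 2⁻¹ * max ‖Y (j + 1) (true :: σ) - Y j (true :: σ)‖
            ‖Y (j + 1) (false :: σ) - Y j (false :: σ)‖ := by
          gcongr
          exact norm_sub_add_sub_le_max htree (B.incompRel_node_cons σ)
            (hmem _ _) (hmem _ _) (hmem _ _) (hmem _ _)
      _ ≤ 2⁻¹ * (2 * M * 2⁻¹ ^ j) := by gcongr; exact max_le (ih _) (ih _)
      _ = 2 * M * 2⁻¹ ^ (j + 1) := by ring

theorem exists_muFn_minimizers (htree : IsTree Υ) (hH : IsHausdorffTree Υ)
    {n : C0Tree Υ → ℝ} (hn : IsEquivNorm n) {k : ℝ} (hk : ∀ σ, muFn n (B.node σ) = k) :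
    ∃ ψ : List Bool → C0Tree Υ, (∀ σ, ψ σ ∈ muAdmissible (B.node σ) ∧ n (ψ σ) ≤ k) ∧
      ∀ σ, ψ σ = (2⁻¹ : ℝ) • (ψ (true :: σ) + ψ (false :: σ)) := by
  choose f hf hfn using fun σ : List Bool =>
    exists_lt_muFn_add (n := n) htree hH (B.node σ) (pow_pos (inv_pos.mpr two_pos) σ.length)
  simp only [hk] at hfn
  have hYn := dyadicAverage_le hn.midpoint_le (fun σ => (hfn σ).le)
  obtain ⟨c, _, hc, hcn⟩ := hn.2.2
  have hM (j : ℕ) (σ : List Bool) : ‖dyadicAverage f j σ‖ ≤ (k + 1) / c := by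
    rw [le_div_iff₀' hc]
    have : (2⁻¹ : ℝ) ^ (j + σ.length) ≤ 1 := pow_le_one₀ (by norm_num) (by norm_num)
    linarith [hYn j σ, (hcn (dyadicAverage f j σ)).1]
  have hcauchy (σ : List Bool) : CauchySeq fun j => dyadicAverage f j σ :=
    cauchySeq_of_le_geometric 2⁻¹ (2 * ((k + 1) / c)) (by norm_num) fun j => by
      rw [dist_comm, dist_eq_norm]
      exact B.norm_dyadicAverage_succ_sub_le htree hf hM j σ
  choose ψ hψ using fun σ => cauchySeq_tendsto_of_complete (hcauchy σ)
  refine ⟨ψ, fun σ => ⟨?_, ?_⟩, eq_midpoint_of_tendsto_dyadicAverage hψ⟩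
  · exact (isClosed_muAdmissible _).mem_of_tendsto (hψ σ)
      (.of_forall (B.dyadicAverage_mem_muAdmissible htree hf · σ))
  · have hlim : Tendsto (fun j => k + (2⁻¹ : ℝ) ^ (j + σ.length)) atTop (𝓝 k) := by
      simpa using tendsto_const_nhds.add ((tendsto_pow_atTop_nhds_zero_of_lt_one (r := (2⁻¹ : ℝ))
        (by norm_num) (by norm_num)).comp (tendsto_add_atTop_nat σ.length))
    exact le_of_tendsto_of_tendsto' ((hn.continuous.tendsto _).comp (hψ σ)) hlim (hYn · σ)

theorem not_forall_muFn_eq (htree : IsTree Υ) (hH : IsHausdorffTree Υ) {n : C0Tree Υ → ℝ}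
    (hn : IsEquivNorm n) (hsc : IsStrictConvexNorm n) (k : ℝ) :
    ¬ ∀ σ, muFn n (B.node σ) = k := by
  intro hk
  obtain ⟨ψ, hψ, hmid⟩ := B.exists_muFn_minimizers htree hH hn hk
  have hnψ (σ : List Bool) : n (ψ σ) = k :=
    le_antisymm (hψ σ).2 (hk σ ▸ muFn_le hn (hψ σ).1)
  have heq : ψ [true] = ψ [false] :=
    hsc _ _ ((hnψ _).trans (hnψ _).symm) (by rw [← hmid [], hnψ, hnψ])
  have hincomp := B.incompRel_node_cons []
  have h1 : ψ [true] (toTree (B.node [true])) = 1 := (hψ [true]).1.1 _ le_rfl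
  have h0 : ψ [false] (toTree (B.node [true])) = 0 :=
    (hψ [false]).1.2 _ hincomp.1 fun h => hincomp.2 h.le
  rw [heq, h0] at h1
  exact zero_ne_one h1

end DyadicBranching

/-- Proposition 3.4: if `C₀(Υ)` has an equivalent strictly convex norm, the associated
function `μ` is constant on no ever-branching subset. -/
theorem statement5 {Υ : Type*} [PartialOrder Υ] (htree : IsTree Υ)
    (hH : IsHausdorffTree Υ)
    (n : C0Tree Υ → ℝ) (hn : IsEquivNorm n) (hsc : IsStrictConvexNorm n) :
    ConstOnNoEverBranching (muFn n) := by
  rintro Γ ⟨t₀, ht₀⟩ hΓ ⟨k, hk⟩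
  obtain ⟨B, hB⟩ := hΓ.exists_dyadicBranching ht₀
  exact B.not_forall_muFn_eq htree hH hn hsc k fun σ => hk _ (hB σ)
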